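/- Let p be an odd prime and G a finite group. The following three conditions are equivalent: (i) G is section p-stable; (ii) for all subgroups K ⊴ H ≤ G, the quotient group H/K is p-stable; (iii) for every p-subgroup R of G, the quotient N_G(R)/R is p-stable. -/

import Mathlib

open scoped commutatorElement

/-- `O_p(G)`: the largest normal `p`-subgroup of `G`. -/
def pCore (p : ℕ) (G : Type*) [Group G] : Subgroup G :=
  sSup {N : Subgroup G | N.Normal ∧ IsPGroup p N}

instance relCent_normal {G : Type*} [Group G] (Q : Subgroup G) :
    ((Subgroup.centralizer (Q : Set G)).subgroupOf (Subgroup.normalizer (Q : Set G))).Normal := by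
  rw [← Subgroup.normalizerMonoidHom_ker]
  exact MonoidHom.normal_ker _

/-- A group `G` is `p`-stable if for every `p`-subgroup `Q` and every `x ∈ N_G(Q)` with
`[[a,x],x] = 1` for all `a ∈ Q`, the image of `x` in `N_G(Q)/C_G(Q)` lies in
`O_p(N_G(Q)/C_G(Q))`. -/
def IsPStable (p : ℕ) (G : Type*) [Group G] : Prop :=
  ∀ Q : Subgroup G, IsPGroup p Q →
    ∀ x : Subgroup.normalizer (Q : Set G), (∀ a ∈ Q, ⁅⁅a, (x : G)⁆, (x : G)⁆ = 1) →
      (QuotientGroup.mk x :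
          Subgroup.normalizer (Q : Set G) ⧸ (Subgroup.centralizer (Q : Set G)).subgroupOf (Subgroup.normalizer (Q : Set G))) ∈
        pCore p (Subgroup.normalizer (Q : Set G) ⧸ (Subgroup.centralizer (Q : Set G)).subgroupOf (Subgroup.normalizer (Q : Set G)))

/-- `C_G(Q/R)`: the subgroup of `N_G(Q/R) = N_G(Q) ∩ N_G(R)` of elements acting trivially
on `Q/R`, i.e. those `x` with `[a,x] ∈ R` for all `a ∈ Q`. -/
def sectionCentralizer {G : Type*} [Group G] (Q R : Subgroup G) :
    Subgroup ↥(Subgroup.normalizer (Q : Set G) ⊓ Subgroup.normalizer (R : Set G)) where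
  carrier := {x | ∀ a ∈ Q, ⁅a, (x : G)⁆ ∈ R}
  one_mem' := by
    intro a _
    simpa using one_mem R
  mul_mem' := by
    intro x y hx hy a ha
    have hxR : (x : G) ∈ Subgroup.normalizer (R : Set G) := (Subgroup.mem_inf.mp x.2).2
    have key : ⁅a, ((x * y : ↥(Subgroup.normalizer (Q : Set G) ⊓ Subgroup.normalizer (R : Set G))) : G)⁆ =
        ⁅a, (x : G)⁆ * ((x : G) * ⁅a, (y : G)⁆ * (x : G)⁻¹) := by
      push_cast
      group
    rw [key]
    exact mul_mem (hx a ha) ((Subgroup.mem_normalizer_iff.mp hxR _).mp (hy a ha))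
  inv_mem' := by
    intro x hx a ha
    have hxR : (x : G)⁻¹ ∈ Subgroup.normalizer (R : Set G) := inv_mem (Subgroup.mem_inf.mp x.2).2
    have key : ⁅a, ((x⁻¹ : ↥(Subgroup.normalizer (Q : Set G) ⊓ Subgroup.normalizer (R : Set G))) : G)⁆ =
        (x : G)⁻¹ * ⁅a, (x : G)⁆⁻¹ * ((x : G)⁻¹)⁻¹ := by
      push_cast
      group
    rw [key]
    exact (Subgroup.mem_normalizer_iff.mp hxR _).mp (inv_mem (hx a ha))

instance sectionCentralizer_normal {G : Type*} [Group G] (Q R : Subgroup G) :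
    (sectionCentralizer Q R).Normal := by
  constructor
  intro c hc n a ha
  have hnQ : (n : G) ∈ Subgroup.normalizer (Q : Set G) := (Subgroup.mem_inf.mp n.2).1
  have hnR : (n : G) ∈ Subgroup.normalizer (R : Set G) := (Subgroup.mem_inf.mp n.2).2
  have haQ : (n : G)⁻¹ * a * (n : G) ∈ Q := by
    have := (Subgroup.mem_normalizer_iff.mp (inv_mem hnQ) a).mp ha
    simpa using this
  have key : ⁅a, ((n * c * n⁻¹ : ↥(Subgroup.normalizer (Q : Set G) ⊓ Subgroup.normalizer (R : Set G))) : G)⁆ =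
      (n : G) * ⁅(n : G)⁻¹ * a * (n : G), (c : G)⁆ * (n : G)⁻¹ := by
    push_cast
    group
  rw [key]
  exact (Subgroup.mem_normalizer_iff.mp hnR _).mp (hc _ haQ)

/-- A group `G` is section `p`-stable if for all `p`-subgroups `R ⊴ Q` of `G` and every
`x ∈ N_G(Q/R) = N_G(Q) ∩ N_G(R)` with `[[a,x],x] ∈ R` for all `a ∈ Q`, the image of `x`
in `N_G(Q/R)/C_G(Q/R)` lies in `O_p(N_G(Q/R)/C_G(Q/R))`. -/
def IsSectionPStable (p : ℕ) (G : Type*) [Group G] : Prop :=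
  ∀ Q R : Subgroup G, IsPGroup p Q → R ≤ Q →
    (∀ a ∈ Q, ∀ r ∈ R, a * r * a⁻¹ ∈ R) →
    ∀ x : ↥(Subgroup.normalizer (Q : Set G) ⊓ Subgroup.normalizer (R : Set G)),
      (∀ a ∈ Q, ⁅⁅a, (x : G)⁆, (x : G)⁆ ∈ R) →
      (QuotientGroup.mk x : ↥(Subgroup.normalizer (Q : Set G) ⊓ Subgroup.normalizer (R : Set G)) ⧸ sectionCentralizer Q R) ∈
        pCore p (↥(Subgroup.normalizer (Q : Set G) ⊓ Subgroup.normalizer (R : Set G)) ⧸ sectionCentralizer Q R)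

/-!
For (i) ⇒ (ii), section `p`-stability passes to subgroups, since `N_H(Q/R)/C_H(Q/R)` embeds in
`N_G(Q/R)/C_G(Q/R)`, and to quotients `φ : G ↠ G'`: a `p`-subgroup `Q'` of `G'` is the image of a
Sylow `p`-subgroup `P` of its preimage, by the Frattini argument every element of `N(Q')` lifts
to `N(P)`, and then `N(Q')/C(Q')` is a quotient of `N(P/R)` for `R = P ∩ ker φ` by a subgroup
containing `C(P/R)`. (ii) ⇒ (iii) is a special case, and (iii) ⇒ (i) reads a section `Q/R` in
`N_G(R)/R`. Each time, membership in `O_p` passes along a surjection `g` from a map `f` with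
`ker f ≤ ker g`, because the image under `g` of `f⁻¹(O_p)` is a normal `p`-subgroup.
-/

open Subgroup
open scoped Pointwise

theorem Subgroup.commutatorElement_mem_of_mem_normalizer {G : Type*} [Group G] {H : Subgroup G}
    {a g : G} (ha : a ∈ H) (hg : g ∈ normalizer (H : Set G)) : ⁅a, g⁆ ∈ H := by
  have h := mul_mem ha ((mem_normalizer_iff.mp hg a⁻¹).mp (inv_mem ha))
  simpa [commutatorElement_def, mul_assoc] using h

theorem Subgroup.map_subtype_smul_eq_map_conj {G α : Type*} [Group G] [Group α] {Q : Subgroup G}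
    [MulDistribMulAction α Q] (a : α) (g : G) (hg : ∀ x : Q, ((a • x : Q) : G) = g * x * g⁻¹)
    (T : Subgroup Q) : (a • T).map Q.subtype = (T.map Q.subtype).map (MulAut.conj g) := by
  ext x
  constructor
  · rintro ⟨_, ⟨y, hy, rfl⟩, rfl⟩
    exact ⟨y, mem_map_of_mem _ hy, (hg y).symm⟩
  · rintro ⟨_, ⟨y, hy, rfl⟩, rfl⟩
    exact ⟨a • y, smul_mem_pointwise_smul y a T hy, hg y⟩

theorem mem_sectionCentralizer {G : Type*} [Group G] {Q R : Subgroup G}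
    {x : ↥(normalizer (Q : Set G) ⊓ normalizer (R : Set G))} :
    x ∈ sectionCentralizer Q R ↔ ∀ a ∈ Q, ⁅a, (x : G)⁆ ∈ R :=
  Iff.rfl

section pCore

variable {p : ℕ} {G : Type*} [Group G]

theorem le_pCore {N : Subgroup G} (hN : N.Normal) (hpN : IsPGroup p N) : N ≤ pCore p G :=
  le_sSup ⟨hN, hpN⟩

instance normal_pCore : (pCore p G).Normal :=
  sSup_normal _ fun _ hN ↦ hN.1

theorem isPGroup_pCore : IsPGroup p (pCore p G) :=
  Sylow.sSup_of_normal _ (fun _ hN ↦ hN.2) (fun _ hN ↦ hN.1)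

theorem mem_pCore_of_ker_le {A B C : Type*} [Group A] [Group B] [Group C] (f : A →* B)
    (g : A →* C) (hg : Function.Surjective g) (hfg : f.ker ≤ g.ker) {x : A}
    (hx : f x ∈ pCore p B) : g x ∈ pCore p C := by
  refine le_pCore (((normal_pCore).comap f).map g hg) ?_ (mem_map_of_mem g (mem_comap.mpr hx))
  rintro ⟨_, a, ha, rfl⟩
  obtain ⟨k, hk⟩ := isPGroup_pCore ⟨f a, ha⟩
  refine ⟨k, Subtype.ext ?_⟩
  have : a ^ p ^ k ∈ g.ker := hfg (by simpa using congrArg Subtype.val hk)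
  simpa using this

end pCore

section NormalizerQuotient

variable {A X : Type*} [Group A] [Group X]

def toNormalizerQuot (ψ : A →* X) (Q : Subgroup X) (hψ : ∀ a, ψ a ∈ normalizer (Q : Set X)) :
    A →* normalizer (Q : Set X) ⧸ (centralizer (Q : Set X)).subgroupOf (normalizer (Q : Set X)) :=
  (QuotientGroup.mk' _).comp (ψ.codRestrict _ hψ)

variable {ψ : A →* X} {Q : Subgroup X} {hψ : ∀ a, ψ a ∈ normalizer (Q : Set X)}

theorem toNormalizerQuot_eq_one_iff {a : A} :
    toNormalizerQuot ψ Q hψ a = 1 ↔ ∀ q ∈ Q, ⁅q, ψ a⁆ = 1 := by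
  rw [toNormalizerQuot, MonoidHom.comp_apply, QuotientGroup.mk'_apply, QuotientGroup.eq_one_iff,
    mem_subgroupOf, MonoidHom.codRestrict_apply, mem_centralizer_iff]
  simp only [SetLike.mem_coe, commutatorElement_eq_one_iff_mul_comm]

theorem toNormalizerQuot_surjective (h : ∀ y ∈ normalizer (Q : Set X), ∃ a, ψ a = y) :
    Function.Surjective (toNormalizerQuot ψ Q hψ) := by
  rintro ⟨y⟩
  obtain ⟨a, ha⟩ := h y y.2
  exact ⟨a, congrArg _ (Subtype.ext ha)⟩

theorem IsPStable.toNormalizerQuot_mem_pCore {p : ℕ} (hX : IsPStable p X) (hQ : IsPGroup p Q)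
    {x : A} (hx : ∀ q ∈ Q, ⁅⁅q, ψ x⁆, ψ x⁆ = 1) : toNormalizerQuot ψ Q hψ x ∈ pCore p _ :=
  hX Q hQ ⟨ψ x, hψ x⟩ hx

end NormalizerQuotient

theorem Sylow.exists_mul_mem_normalizer_map_subtype {p : ℕ} [Fact p.Prime] {G : Type*} [Group G]
    [Finite G] {Q : Subgroup G} (P : Sylow p Q) {h : G} (hh : h ∈ normalizer (Q : Set G)) :
    ∃ q ∈ Q, q * h ∈ normalizer ((P.map Q.subtype : Subgroup G) : Set G) := by
  obtain ⟨q, hq⟩ := MulAction.exists_smul_eq Q ((⟨h, hh⟩ : normalizer (Q : Set G)) • P) P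
  refine ⟨q, q.2, mem_normalizer_iff_map_conj_eq.mpr ?_⟩
  have hconj : (MulAut.conj ((q : G) * h) : G →* G) = (MulAut.conj (q : G) : G →* G).comp
      (MulAut.conj h) := by
    ext; simp [mul_assoc]
  have := congrArg (fun S : Sylow p Q ↦ (S : Subgroup Q).map Q.subtype) hq
  simp only [Sylow.coe_subgroup_smul, Sylow.pointwise_smul_def] at this
  rwa [map_subtype_smul_eq_map_conj _ (q : G) (fun _ ↦ rfl),
    map_subtype_smul_eq_map_conj _ h (fun _ ↦ rfl), map_map, ← hconj] at this

theorem exists_isPGroup_map_eq_forall_lift_normalizer {p : ℕ} [Fact p.Prime] {G G' : Type*}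
    [Group G] [Group G'] [Finite G] {φ : G →* G'} (hφ : Function.Surjective φ)
    {Q' : Subgroup G'} (hQ' : IsPGroup p Q') :
    ∃ P : Subgroup G, IsPGroup p P ∧ P.map φ = Q' ∧
      ∀ y ∈ normalizer (Q' : Set G'), ∃ x ∈ normalizer (P : Set G), φ x = y := by
  set Qt := Q'.comap φ
  obtain ⟨P⟩ : Nonempty (Sylow p Qt) := inferInstance
  have hmap : (P.map Qt.subtype).map φ = Q' := by
    refine le_antisymm (map_le_iff_le_comap.mpr (map_subtype_le _)) fun y hy ↦ ?_
    let φ' : Qt →* Q' := (φ.comp Qt.subtype).codRestrict Q' fun q ↦ q.2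
    have hφ' : Function.Surjective φ' := by
      rintro ⟨y, hy⟩
      obtain ⟨g, rfl⟩ := hφ y
      exact ⟨⟨g, hy⟩, rfl⟩
    have htop : ⊤ = P.map φ' := (P.mapSurjective hφ').3 (hQ'.to_subgroup ⊤) le_top
    obtain ⟨q, hqP, hq⟩ : (⟨y, hy⟩ : Q') ∈ P.map φ' := htop ▸ mem_top _
    exact ⟨q, mem_map_of_mem _ hqP, congrArg Subtype.val hq⟩
  refine ⟨P.map Qt.subtype, P.2.map _, hmap, fun y hy ↦ ?_⟩
  obtain ⟨g, rfl⟩ := hφ y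
  have hg : g ∈ normalizer (Qt : Set G) := by
    rw [← comap_normalizer_eq_of_surjective _ hφ]
    exact hy
  obtain ⟨q, hq, hqg⟩ := P.exists_mul_mem_normalizer_map_subtype hg
  obtain ⟨u, hu, hφu⟩ : φ q ∈ (P.map Qt.subtype).map φ := hmap ▸ hq
  exact ⟨u⁻¹ * (q * g), mul_mem (inv_mem (le_normalizer hu)) hqg, by simp [hφu]⟩

theorem IsSectionPStable.of_injective {p : ℕ} {G H : Type*} [Group G] [Group H]
    (hG : IsSectionPStable p G) {φ : H →* G} (hφ : Function.Injective φ) :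
    IsSectionPStable p H := by
  intro Q R hQ hRQ hconj x hx
  let ι : ↥(normalizer (Q : Set H) ⊓ normalizer (R : Set H)) →*
      ↥(normalizer ((Q.map φ : Subgroup G) : Set G) ⊓ normalizer ((R.map φ : Subgroup G) : Set G)) :=
    (φ.comp (Subgroup.subtype _)).codRestrict _ fun v ↦
      ⟨le_normalizer_map φ (mem_map_of_mem φ v.2.1), le_normalizer_map φ (mem_map_of_mem φ v.2.2)⟩
  have hconj' : ∀ a ∈ Q.map φ, ∀ r ∈ R.map φ, a * r * a⁻¹ ∈ R.map φ := by
    rintro _ ⟨a, ha, rfl⟩ _ ⟨r, hr, rfl⟩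
    simpa using mem_map_of_mem φ (hconj a ha r hr)
  have hx' : ∀ a ∈ Q.map φ, ⁅⁅a, (ι x : G)⁆, (ι x : G)⁆ ∈ R.map φ := by
    rintro _ ⟨a, ha, rfl⟩
    show ⁅⁅φ a, φ x⁆, φ x⁆ ∈ R.map φ
    rw [← map_commutatorElement, ← map_commutatorElement]
    exact mem_map_of_mem φ (hx a ha)
  refine mem_pCore_of_ker_le ((QuotientGroup.mk' _).comp ι) (QuotientGroup.mk' _)
    (QuotientGroup.mk'_surjective _) (fun v hv ↦ ?_)
    (hG _ _ (hQ.map φ) (map_mono hRQ) hconj' (ι x) hx')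
  rw [MonoidHom.mem_ker, MonoidHom.comp_apply, QuotientGroup.mk'_apply, QuotientGroup.eq_one_iff,
    mem_sectionCentralizer] at hv
  rw [QuotientGroup.ker_mk', mem_sectionCentralizer]
  intro a ha
  rw [← mem_map_iff_mem hφ, map_commutatorElement]
  exact hv (φ a) (mem_map_of_mem φ ha)

theorem IsSectionPStable.isPStable_of_surjective {p : ℕ} [Fact p.Prime] {G G' : Type*} [Group G]
    [Group G'] [Finite G] (hG : IsSectionPStable p G) {φ : G →* G'}
    (hφ : Function.Surjective φ) : IsPStable p G' := by
  intro Q' hQ' x' hx'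
  obtain ⟨P, hP, hPQ', hlift⟩ := exists_isPGroup_map_eq_forall_lift_normalizer hφ hQ'
  have hNP : normalizer (P : Set G) ≤ normalizer ((P ⊓ φ.ker : Subgroup G) : Set G) :=
    fun v hv ↦ inf_normalizer_le_normalizer_inf ⟨hv, normalizer_eq_top (H := φ.ker) ▸ mem_top v⟩
  set A := normalizer (P : Set G) ⊓ normalizer ((P ⊓ φ.ker : Subgroup G) : Set G)
  have hψ (a : A) : (φ.comp A.subtype) a ∈ normalizer (Q' : Set G') :=
    hPQ' ▸ le_normalizer_map φ (mem_map_of_mem φ a.2.1)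
  have hg : Function.Surjective (toNormalizerQuot (φ.comp A.subtype) Q' hψ) :=
    toNormalizerQuot_surjective fun y hy ↦
      let ⟨x, hxP, hx⟩ := hlift y hy
      ⟨⟨x, hxP, hNP hxP⟩, hx⟩
  have hker : (QuotientGroup.mk' (sectionCentralizer P (P ⊓ φ.ker))).ker ≤
      (toNormalizerQuot (φ.comp A.subtype) Q' hψ).ker := by
    intro v hv
    rw [QuotientGroup.ker_mk', mem_sectionCentralizer] at hv
    rw [MonoidHom.mem_ker, toNormalizerQuot_eq_one_iff, ← hPQ']
    rintro _ ⟨a, ha, rfl⟩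
    simpa [map_commutatorElement] using (hv a ha).2
  obtain ⟨x, hxP, hx⟩ := hlift x' x'.2
  have hcomm : ∀ a ∈ P, ⁅⁅a, x⁆, x⁆ ∈ P ⊓ φ.ker := fun a ha ↦
    ⟨commutatorElement_mem_of_mem_normalizer (commutatorElement_mem_of_mem_normalizer ha hxP) hxP,
      by simpa [map_commutatorElement, hx] using hx' (φ a) (hPQ' ▸ mem_map_of_mem φ ha)⟩
  have hmem := mem_pCore_of_ker_le _ _ hg hker (hG P (P ⊓ φ.ker) hP inf_le_left
    (fun a ha r hr ↦ (mem_normalizer_iff.mp (hNP (le_normalizer ha)) r).mp hr) ⟨x, hxP, hNP hxP⟩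
    hcomm)
  rwa [show toNormalizerQuot (φ.comp A.subtype) Q' hψ ⟨x, hxP, hNP hxP⟩ = (x' : _ ⧸ _) from
    congrArg QuotientGroup.mk (Subtype.ext hx)] at hmem

theorem isSectionPStable_of_forall_isPStable_normalizer_quotient {p : ℕ} {G : Type*} [Group G]
    (h : ∀ R : Subgroup G, IsPGroup p R →
      IsPStable p (normalizer (R : Set G) ⧸ R.subgroupOf (normalizer (R : Set G)))) :
    IsSectionPStable p G := by
  intro Q R hQ hRQ hconj x hx
  set A := normalizer (Q : Set G) ⊓ normalizer (R : Set G)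
  let ψ : A →* normalizer (R : Set G) ⧸ R.subgroupOf (normalizer (R : Set G)) :=
    (QuotientGroup.mk' _).comp (inclusion inf_le_right)
  have hψ {z : A} : ψ z = 1 ↔ (z : G) ∈ R := by
    simp [ψ, QuotientGroup.eq_one_iff, mem_subgroupOf]
  have hQA : Q ≤ A := fun a ha ↦ ⟨le_normalizer ha, mem_normalizer_iff.mpr fun r ↦
    ⟨hconj a ha r, fun hr ↦ by simpa [mul_assoc] using hconj a⁻¹ (inv_mem ha) _ hr⟩⟩
  have hψN (a : A) : ψ a ∈ normalizer (((Q.subgroupOf A).map ψ : Subgroup _) : Set _) :=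
    le_normalizer_map ψ (mem_map_of_mem ψ (le_normalizer_comap A.subtype a.2.1))
  refine mem_pCore_of_ker_le (toNormalizerQuot ψ _ hψN) (QuotientGroup.mk' _)
    (QuotientGroup.mk'_surjective _) (fun v hv ↦ ?_)
    ((h R (hQ.to_le hRQ)).toNormalizerQuot_mem_pCore (hQ.comap_subtype.map ψ) ?_)
  · rw [MonoidHom.mem_ker, toNormalizerQuot_eq_one_iff] at hv
    rw [QuotientGroup.ker_mk', mem_sectionCentralizer]
    intro a ha
    have := hv (ψ ⟨a, hQA ha⟩) (mem_map_of_mem ψ (mem_subgroupOf.mpr ha))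
    rwa [← map_commutatorElement, hψ] at this
  · rintro _ ⟨a, ha, rfl⟩
    rw [← map_commutatorElement, ← map_commutatorElement, hψ]
    exact hx a ha

theorem sectionPStable_iff_general (p : ℕ) (hp : p.Prime)
    (G : Type*) [Group G] [Finite G] :
    (IsSectionPStable p G ↔
        ∀ (H : Subgroup G) (K : Subgroup H) (hK : K.Normal),
          letI := hK
          IsPStable p (H ⧸ K)) ∧
      (IsSectionPStable p G ↔
        ∀ R : Subgroup G, IsPGroup p R →
          IsPStable p (Subgroup.normalizer (R : Set G) ⧸ R.subgroupOf (Subgroup.normalizer (R : Set G)))) := by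
  have : Fact p.Prime := ⟨hp⟩
  have sections (hG : IsSectionPStable p G) (H : Subgroup G) (K : Subgroup H) [K.Normal] :
      IsPStable p (H ⧸ K) :=
    (hG.of_injective H.subtype_injective).isPStable_of_surjective (QuotientGroup.mk'_surjective K)
  exact ⟨⟨fun hG H K _ ↦ sections hG H K,
      fun h ↦ isSectionPStable_of_forall_isPStable_normalizer_quotient fun R _ ↦ h _ _ _⟩,
    ⟨fun hG R _ ↦ sections hG _ _, isSectionPStable_of_forall_isPStable_normalizer_quotient⟩⟩

/-- For a finite group `G` and an odd prime `p`, the following are equivalent: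
(i) `G` is section `p`-stable; (ii) every section `H/K` (`K ⊴ H ≤ G`) is `p`-stable;
(iii) `N_G(R)/R` is `p`-stable for every `p`-subgroup `R` of `G`. -/
theorem sectionPStable_iff (p : ℕ) (hp : p.Prime) (hodd : Odd p)
    (G : Type*) [Group G] [Finite G] :
    (IsSectionPStable p G ↔
        ∀ (H : Subgroup G) (K : Subgroup H) (hK : K.Normal),
          letI := hK
          IsPStable p (H ⧸ K)) ∧
      (IsSectionPStable p G ↔
        ∀ R : Subgroup G, IsPGroup p R →
          IsPStable p (Subgroup.normalizer (R : Set G) ⧸ R.subgroupOf (Subgroup.normalizer (R : Set G)))) :=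
  sectionPStable_iff_general p hp G
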